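/- (Characterization of true features in the expanded support.) With y = Φx*, s* = supp(x*) where all entries of x* on s* are nonzero, let p be an index set with s* ⊆ p, |p| ≤ m + ℓ, and δ_{m+ℓ} < 1/2. Let x̂ be the least-squares estimate of y supported on p. Then for every i ∈ p: i ∈ s* if and only if x̂_i ≠ 0. -/

import Mathlib

open Matrix Finset

noncomputable section

/-- Number of nonzero entries of a vector. -/
def sparsity {d : ℕ} (x : Fin d → ℝ) : ℕ :=
  (Finset.univ.filter fun i => x i ≠ 0).card

/-- Squared Euclidean norm. -/
def nsq {k : Type*} [Fintype k] (v : k → ℝ) : ℝ := ∑ i, v i ^ 2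

/-- Euclidean (ℓ₂) norm. -/
def l2 {k : Type*} [Fintype k] (v : k → ℝ) : ℝ := Real.sqrt (nsq v)

/-- `Φ` satisfies the order-`t` restricted isometry property with constant `δ`. -/
def satRIP {n d : ℕ} (Φ : Matrix (Fin n) (Fin d) ℝ) (t : ℕ) (δ : ℝ) : Prop :=
  ∀ x : Fin d → ℝ, sparsity x ≤ t →
    (1 - δ) * nsq x ≤ nsq (Φ.mulVec x) ∧ nsq (Φ.mulVec x) ≤ (1 + δ) * nsq x

/-- The order-`t` RIP constant of `Φ` : the smallest `δ ≥ 0` satisfying the RIP bounds. -/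
def ripConst {n d : ℕ} (Φ : Matrix (Fin n) (Fin d) ℝ) (t : ℕ) : ℝ :=
  sInf {δ : ℝ | 0 ≤ δ ∧ satRIP Φ t δ}

/-- The submatrix of `Φ` consisting of the columns indexed by `s`. -/
def cols {n d : ℕ} (Φ : Matrix (Fin n) (Fin d) ℝ) (s : Finset (Fin d)) :
    Matrix (Fin n) {i // i ∈ s} ℝ := Φ.submatrix id (fun i => (i : Fin d))

/-- Orthogonal projection `P{Φ_s} = Φ_s (Φ_sᵀ Φ_s)⁻¹ Φ_sᵀ` onto the column span of `Φ_s`. -/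
def proj {n d : ℕ} (Φ : Matrix (Fin n) (Fin d) ℝ) (s : Finset (Fin d)) :
    Matrix (Fin n) (Fin n) ℝ :=
  cols Φ s * ((cols Φ s)ᵀ * cols Φ s)⁻¹ * (cols Φ s)ᵀ

/-- Least-squares residual `v^{⊥s} = (I - P{Φ_s}) v`. -/
def residVec {n d : ℕ} (Φ : Matrix (Fin n) (Fin d) ℝ) (s : Finset (Fin d)) (y : Fin n → ℝ) :
    Fin n → ℝ := y - (proj Φ s).mulVec y

/-- The `i`-th column of `Φ`. -/
def col {n d : ℕ} (Φ : Matrix (Fin n) (Fin d) ℝ) (i : Fin d) : Fin n → ℝ := fun k => Φ k i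

/-- `x` is a least-squares estimate of `y` supported on `s`:
it is supported on `s` and minimizes `‖y - Φ z‖₂` over all `z` supported on `s`. -/
def leastSq {n d : ℕ} (Φ : Matrix (Fin n) (Fin d) ℝ) (y : Fin n → ℝ) (s : Finset (Fin d))
    (x : Fin d → ℝ) : Prop :=
  (∀ i, i ∉ s → x i = 0) ∧
  ∀ z : Fin d → ℝ, (∀ i, i ∉ s → z i = 0) → nsq (y - Φ.mulVec x) ≤ nsq (y - Φ.mulVec z)

/-- The support of a vector, as a `Finset`. -/
def spt {d : ℕ} (x : Fin d → ℝ) : Finset (Fin d) :=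
  Finset.univ.filter fun i => x i ≠ 0

/-
The true coefficient vector `x*` is itself supported on `p`, so it attains residual zero;
hence `Φ x̂ = Φ x*`. The difference `x* - x̂` is supported on `p`, so it is `(m + ℓ)`-sparse, and
the lower RIP bound with `δ < 1` forces `x̂ = x*`. The nonzero entries of `x̂` are then exactly `s*`.
The only subtlety is that `ripConst` is an `sInf`, which would be the junk value `0` if no `δ`
satisfied the RIP; the Frobenius bound `‖Φ x‖² ≤ ‖Φ‖_F² ‖x‖²` rules this out.
-/

lemma nsq_nonneg {k : Type*} [Fintype k] (v : k → ℝ) : 0 ≤ nsq v :=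
  Finset.sum_nonneg fun _ _ => sq_nonneg _

lemma nsq_eq_zero_iff {k : Type*} [Fintype k] {v : k → ℝ} : nsq v = 0 ↔ v = 0 := by
  simp [nsq, Finset.sum_eq_zero_iff_of_nonneg (fun i _ => sq_nonneg (v i)), funext_iff]

lemma nsq_mulVec_le {k l : Type*} [Fintype k] [Fintype l] (A : Matrix k l ℝ) (x : l → ℝ) :
    nsq (A *ᵥ x) ≤ (∑ i, ∑ j, A i j ^ 2) * nsq x := by
  rw [nsq, Finset.sum_mul]
  refine Finset.sum_le_sum fun i _ => ?_
  simpa [Matrix.mulVec, dotProduct, nsq] using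
    Finset.sum_mul_sq_le_sq_mul_sq Finset.univ (fun j => A i j) x

lemma satRIP_sum_sq_add_one {n d : ℕ} (Φ : Matrix (Fin n) (Fin d) ℝ) (t : ℕ) :
    satRIP Φ t ((∑ i, ∑ j, Φ i j ^ 2) + 1) := by
  intro x _
  have hC : 0 ≤ ∑ i, ∑ j, Φ i j ^ 2 := by positivity
  have hx := nsq_nonneg x
  constructor
  · nlinarith [nsq_nonneg (Φ *ᵥ x)]
  · nlinarith [nsq_mulVec_le Φ x]

lemma exists_satRIP_lt_of_ripConst_lt {n d : ℕ} {Φ : Matrix (Fin n) (Fin d) ℝ} {t : ℕ} {c : ℝ}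
    (h : ripConst Φ t < c) : ∃ δ < c, satRIP Φ t δ := by
  have hC : 0 ≤ ∑ i, ∑ j, Φ i j ^ 2 := by positivity
  obtain ⟨δ, ⟨-, hδ⟩, hδc⟩ :=
    exists_lt_of_csInf_lt (s := {δ : ℝ | 0 ≤ δ ∧ satRIP Φ t δ})
      ⟨_, by linarith, satRIP_sum_sq_add_one Φ t⟩ h
  exact ⟨δ, hδc, hδ⟩

lemma sparsity_le_card {d : ℕ} {x : Fin d → ℝ} {s : Finset (Fin d)}
    (hx : ∀ i, i ∉ s → x i = 0) : sparsity x ≤ s.card :=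
  Finset.card_le_card fun i hi => by
    by_contra his
    simp [hx i his] at hi

lemma eq_of_mulVec_eq_of_satRIP {n d : ℕ} {Φ : Matrix (Fin n) (Fin d) ℝ} {t : ℕ} {δ : ℝ}
    (hΦ : satRIP Φ t δ) (hδ : δ < 1) {x z : Fin d → ℝ} (hxz : sparsity (x - z) ≤ t)
    (h : Φ *ᵥ x = Φ *ᵥ z) : x = z := by
  have hlow := (hΦ (x - z) hxz).1
  rw [Matrix.mulVec_sub, h, sub_self, nsq_eq_zero_iff.mpr rfl] at hlow
  have : nsq (x - z) = 0 := by nlinarith [nsq_nonneg (x - z)]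
  exact sub_eq_zero.mp (nsq_eq_zero_iff.mp this)

lemma leastSq.mulVec_eq {n d : ℕ} {Φ : Matrix (Fin n) (Fin d) ℝ} {s : Finset (Fin d)}
    {x z : Fin d → ℝ} (hz : leastSq Φ (Φ *ᵥ x) s z) (hx : ∀ i, i ∉ s → x i = 0) :
    Φ *ᵥ z = Φ *ᵥ x := by
  have hle := hz.2 x hx
  rw [sub_self, nsq_eq_zero_iff.mpr rfl] at hle
  exact (sub_eq_zero.mp (nsq_eq_zero_iff.mp (le_antisymm hle (nsq_nonneg _)))).symm

theorem stmt15_general {n d : ℕ} (Φ : Matrix (Fin n) (Fin d) ℝ)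
    (xs : Fin d → ℝ) (m ℓ : ℕ) (p : Finset (Fin d))
    (hsub : spt xs ⊆ p) (hp : p.card ≤ m + ℓ)
    (hδ : ripConst Φ (m + ℓ) < 1 / 2)
    (xh : Fin d → ℝ) (hx : leastSq Φ (Φ.mulVec xs) p xh) :
    ∀ i ∈ p, (i ∈ spt xs ↔ xh i ≠ 0) := by
  obtain ⟨δ, hδ, hRIP⟩ := exists_satRIP_lt_of_ripConst_lt hδ
  have hxs : ∀ i, i ∉ p → xs i = 0 := fun i hi => by
    by_contra h
    exact hi (hsub (by simp [spt, h]))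
  have hdiff : ∀ i, i ∉ p → (xs - xh) i = 0 := fun i hi => by
    simp [hxs i hi, hx.1 i hi]
  have heq : xs = xh := eq_of_mulVec_eq_of_satRIP hRIP (by linarith)
    ((sparsity_le_card hdiff).trans hp) (hx.mulVec_eq hxs).symm
  intro i _
  simp [spt, heq]

/-- Lemma 8 of the paper: characterization of true features in the
expanded support — `i ∈ s*` iff the least-squares coefficient `x̂_i` is nonzero. -/
theorem stmt15 {n d : ℕ} (Φ : Matrix (Fin n) (Fin d) ℝ)
    (hunit : ∀ j, nsq (_root_.col Φ j) = 1)
    (xs : Fin d → ℝ) (m ℓ : ℕ) (p : Finset (Fin d))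
    (hsub : spt xs ⊆ p) (hp : p.card ≤ m + ℓ)
    (hδ : ripConst Φ (m + ℓ) < 1 / 2)
    (xh : Fin d → ℝ) (hx : leastSq Φ (Φ.mulVec xs) p xh) :
    ∀ i ∈ p, (i ∈ spt xs ↔ xh i ≠ 0) :=
  stmt15_general Φ xs m ℓ p hsub hp hδ xh hx
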